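/- For all 𝐤,𝐦∈ℕ[Φ]^W: (i) η_{𝐤+𝐦}(λ)=η_𝐦(η_𝐤(λ)) for every λ∈P; and (ii) the map η_𝐤:P→P is injective. -/

import Mathlib

/-!
Write `λ = w_λ(ν)` with `ν = λ_dom`. Then `η_𝐤(λ) = w_λ(ν + ρ_𝐤)` and `ν + ρ_𝐤` is dominant, so
`η_𝐤(λ)_dom = ν + ρ_𝐤`. The key point is `w_{η_𝐤(λ)} = w_λ`. By the strong exchange condition,
an element of minimal length sending a dominant `δ` to `μ` keeps positive every positive root
orthogonal to `δ`, and at most one element sending `δ` to `μ` does so. A positive root orthogonal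
to `ν + ρ_𝐤` is orthogonal to `ν`, so `w_λ` and `w_{η_𝐤(λ)}` both have this property for
`δ = ν + ρ_𝐤`. Hence `η_{𝐤+𝐦}(λ) = w_λ(ν + ρ_𝐤 + ρ_𝐦) = η_𝐦(η_𝐤(λ))`, and `λ` is recovered
from `η_𝐤(λ)` as `w_{η_𝐤(λ)}(η_𝐤(λ)_dom - ρ_𝐤)`.
-/

open RealInnerProductSpace Pointwise

noncomputable section

variable {V : Type*} [NormedAddCommGroup V] [InnerProductSpace ℝ V]

/-- The coroot `α∨ = 2α/⟨α,α⟩` associated to a vector `α`. -/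
def coroot (α : V) : V := (2 / ⟪α, α⟫) • α

/-- The reflection `s_α(v) = v − ⟨v,α∨⟩α` across the hyperplane orthogonal to `α`. -/
def sRefl (α : V) (v : V) : V := v - ⟪v, coroot α⟫ • α

/-- An irreducible reduced crystallographic root system in the real inner product
space `V`, together with a chosen set of positive roots and simple roots. -/
structure RootSystemData (V : Type*) [NormedAddCommGroup V] [InnerProductSpace ℝ V] where
  n : ℕ
  roots : Set V
  roots_finite : roots.Finite
  roots_nonzero : (0 : V) ∉ roots
  roots_span : Submodule.span ℝ roots = ⊤
  refl_mem : ∀ α ∈ roots, ∀ β ∈ roots, sRefl α β ∈ roots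
  reduced : ∀ α ∈ roots, ∀ c : ℝ, c • α ∈ roots → c • α = α ∨ c • α = -α
  crystallographic : ∀ α ∈ roots, ∀ β ∈ roots, ∃ m : ℤ, ⟪β, coroot α⟫ = (m : ℝ)
  pos : Set V
  pos_subset : pos ⊆ roots
  pos_union : roots = pos ∪ (-pos)
  simple : Fin n → V
  simple_mem : ∀ i, simple i ∈ pos
  simple_li : LinearIndependent ℝ simple
  simple_span : Submodule.span ℝ (Set.range simple) = ⊤
  pos_combo : ∀ α ∈ pos, ∃ c : Fin n → ℕ, α = ∑ i, (c i : ℝ) • simple i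
  irred : ∀ S₁ S₂ : Set V, roots = S₁ ∪ S₂ →
    (∀ α ∈ S₁, ∀ β ∈ S₂, ⟪α, β⟫ = 0) → S₁ = ∅ ∨ S₂ = ∅

namespace RootSystemData

variable (R : RootSystemData V)

/-- The Weyl group `W`: all finite compositions of reflections in roots. -/
def weyl : Set (V → V) :=
  {w | ∃ l : List V, (∀ α ∈ l, α ∈ R.roots) ∧ w = (l.map sRefl).foldr (· ∘ ·) id}

/-- The orbit `W(v)` of a vector under the Weyl group. -/
def orbit (v : V) : Set V := {u | ∃ w ∈ R.weyl, u = w v}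

/-- The weight lattice `P`. -/
def weightLattice : Set V :=
  {v | ∀ α ∈ R.roots, ∃ m : ℤ, ⟪v, coroot α⟫ = (m : ℝ)}

/-- The permutohedron `Π(v) = ConvexHull W(v)`. -/
def perm (v : V) : Set V := convexHull ℝ (R.orbit v)

/-- The discrete permutohedron `Π^Q(λ) = Π(λ) ∩ (Q+λ)`. -/
def permQ (lam : V) : Set V :=
  R.perm lam ∩ {v | v - lam ∈ Submodule.span ℤ R.roots}

/-- Dominance: nonnegative pairing with all simple coroots. -/
def IsDominant (v : V) : Prop := ∀ i, 0 ≤ ⟪v, coroot (R.simple i)⟫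

/-- `W`-invariance of a function `𝐤 : Φ → ℕ`. -/
def IsWInvariant (k : V → ℕ) : Prop := ∀ w ∈ R.weyl, ∀ α ∈ R.roots, k (w α) = k α

/-- Symmetric interval-firing: `λ → λ+α` for `α ∈ Φ⁺` whenever
`⟨λ,α∨⟩+1 ∈ {−𝐤(α),…,𝐤(α)}`. -/
def symFire (k : V → ℕ) (lam mu : V) : Prop :=
  lam ∈ R.weightLattice ∧ ∃ α ∈ R.pos, mu = lam + α ∧
    -(k α : ℝ) ≤ ⟪lam, coroot α⟫ + 1 ∧ ⟪lam, coroot α⟫ + 1 ≤ (k α : ℝ)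

/-- Truncated interval-firing: `λ → λ+α` for `α ∈ Φ⁺` whenever
`⟨λ,α∨⟩+1 ∈ {−𝐤(α)+1,…,𝐤(α)}`. -/
def trFire (k : V → ℕ) (lam mu : V) : Prop :=
  lam ∈ R.weightLattice ∧ ∃ α ∈ R.pos, mu = lam + α ∧
    -(k α : ℝ) + 1 ≤ ⟪lam, coroot α⟫ + 1 ∧ ⟪lam, coroot α⟫ + 1 ≤ (k α : ℝ)

/-- All roots have the same length. -/
def SimplyLaced : Prop := ∀ α ∈ R.roots, ∀ β ∈ R.roots, ‖α‖ = ‖β‖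

/-- A root of maximal length. -/
def IsLongRoot (α : V) : Prop := α ∈ R.roots ∧ ∀ β ∈ R.roots, ‖β‖ ≤ ‖α‖

/-- A root which is not of maximal length. -/
def IsShortRoot (α : V) : Prop := α ∈ R.roots ∧ ¬ R.IsLongRoot α

/-- `𝐤` is good: either `Φ` is simply laced, or `𝐤` vanishing on short roots
implies `𝐤` vanishing on all (in particular long) roots. -/
def IsGood (k : V → ℕ) : Prop :=
  R.SimplyLaced ∨ ((∀ α, R.IsShortRoot α → k α = 0) → ∀ β ∈ R.roots, k β = 0)

/-- The product of the simple reflections indexed by a word. -/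
def wordProd (l : List (Fin R.n)) : V → V :=
  (l.map (fun i => sRefl (R.simple i))).foldr (· ∘ ·) id

/-- Coxeter length: the minimal length of a word in the simple reflections
expressing `w`. -/
def coxLen (w : V → V) : ℕ :=
  sInf {m : ℕ | ∃ l : List (Fin R.n), l.length = m ∧ w = R.wordProd l}

/-- The parabolic subgroup `W_I`: all compositions of simple reflections `s_{αᵢ}`, `i ∈ I`. -/
def weylI (I : Set (Fin R.n)) : Set (V → V) :=
  {w | ∃ l : List (Fin R.n), (∀ i ∈ l, i ∈ I) ∧ w = R.wordProd l}

/-- The orbit `W_I(v)`. -/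
def orbitI (I : Set (Fin R.n)) (v : V) : Set V := {u | ∃ w ∈ R.weylI I, u = w v}

/-- The discrete parabolic permutohedron `Π^Q_I(λ)`. -/
def permQI (I : Set (Fin R.n)) (lam : V) : Set V :=
  convexHull ℝ (R.orbitI I lam) ∩ {v | v - lam ∈ Submodule.span ℤ R.roots}

/-- Given a choice `dm` of dominant representatives, `I^{0,1}_λ` is the set of
indices `i` with `⟨λ_dom, αᵢ∨⟩ ∈ {0,1}`. -/
def I01 (dm : V → V) (lam : V) : Set (Fin R.n) :=
  {i | ⟪dm lam, coroot (R.simple i)⟫ = 0 ∨ ⟪dm lam, coroot (R.simple i)⟫ = 1}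

/-- The minimal length of an `α`-traverse in `Π^Q(λ)`. -/
def traverseLen (lam α : V) : ℕ :=
  sInf {ℓ : ℕ | ∃ mu : V, (∀ i : ℕ, i ≤ ℓ → mu - (i : ℝ) • α ∈ R.permQ lam) ∧
    mu + α ∉ R.permQ lam ∧ mu - ((ℓ : ℝ) + 1) • α ∉ R.permQ lam}

/-- `m_λ(α) = min {cᵢ : αᵢ ∈ W(α)}` where `λ = Σ cᵢ ωᵢ` is dominant,
i.e. `cᵢ = ⟨λ, αᵢ∨⟩`. -/
def mVal (lam α : V) : ℕ :=
  sInf {c : ℕ | ∃ i, R.simple i ∈ R.orbit α ∧ (c : ℝ) = ⟪lam, coroot (R.simple i)⟫}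

/-- Funny weights (only exist when `Φ` is not simply laced). -/
def IsFunny (lam : V) : Prop :=
  ¬ R.SimplyLaced ∧ ∃ l s : Fin R.n, R.IsLongRoot (R.simple l) ∧ R.IsShortRoot (R.simple s) ∧
    ⟪R.simple l, coroot (R.simple s)⟫ ≠ 0 ∧
    ⟪lam, coroot (R.simple s)⟫ = 0 ∧ 1 ≤ ⟪lam, coroot (R.simple l)⟫ ∧
    ∀ i, R.IsLongRoot (R.simple i) → ⟪lam, coroot (R.simple l)⟫ ≤ ⟪lam, coroot (R.simple i)⟫

end RootSystemData

/-- The map `η_𝐤(λ) = λ + w_λ(ρ_𝐤)`, relative to a choice `fw` of fundamental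
weights and a choice `wl` of minimal-length Weyl elements `λ ↦ w_λ`. -/
def etaMap (R : RootSystemData V) (fw : Fin R.n → V) (wl : V → V → V)
    (k : V → ℕ) (lam : V) : V :=
  lam + wl lam (∑ i, (k (R.simple i) : ℝ) • fw i)

/-- Two points are in the same connected component of a relation if they are
related by its reflexive-transitive-symmetric closure. -/
def SameComponent (r : V → V → Prop) (x y : V) : Prop :=
  Relation.ReflTransGen (fun a b => r a b ∨ r b a) x y

section Reflection

variable {α v : V}

theorem inner_coroot (v α : V) : ⟪v, coroot α⟫ = 2 / ⟪α, α⟫ * ⟪v, α⟫ :=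
  real_inner_smul_right _ _ _

theorem inner_coroot_nonneg_iff (hα : α ≠ 0) : 0 ≤ ⟪v, coroot α⟫ ↔ 0 ≤ ⟪v, α⟫ := by
  rw [inner_coroot]
  exact mul_nonneg_iff_of_pos_left (div_pos two_pos (real_inner_self_pos.mpr hα))

theorem inner_coroot_self (hα : α ≠ 0) : ⟪α, coroot α⟫ = 2 := by
  rw [inner_coroot]
  field_simp [(real_inner_self_pos.mpr hα).ne']

theorem coroot_neg (α : V) : coroot (-α) = -coroot α := by
  simp [coroot, smul_neg]

theorem sRefl_sRefl (α v : V) : sRefl α (sRefl α v) = v := by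
  by_cases hα : α = 0
  · simp [sRefl, coroot, hα]
  · simp only [sRefl, inner_sub_left, real_inner_smul_left, inner_coroot_self hα]
    module

theorem sRefl_self (hα : α ≠ 0) : sRefl α α = -α := by
  rw [sRefl, inner_coroot_self hα]
  module

theorem sRefl_neg (α : V) : sRefl (-α) = sRefl α := by
  ext v
  simp [sRefl, coroot_neg]

theorem sRefl_of_inner_eq_zero (h : ⟪v, α⟫ = 0) : sRefl α v = v := by
  simp [sRefl, inner_coroot, h]

theorem inner_sRefl_sRefl (α u v : V) : ⟪sRefl α u, sRefl α v⟫ = ⟪u, v⟫ := by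
  by_cases hα : α = 0
  · simp [sRefl, coroot, hα]
  · simp only [sRefl, inner_coroot, inner_sub_left, inner_sub_right, real_inner_smul_left,
      real_inner_smul_right, real_inner_comm v α]
    field_simp [(real_inner_self_pos.mpr hα).ne']
    ring

def sReflEquiv (α : V) : V ≃ₗᵢ[ℝ] V :=
  (LinearEquiv.ofInvolutive
    { toFun := sRefl α
      map_add' := fun u v => by simp only [sRefl, inner_add_left, add_smul]; abel
      map_smul' := fun c u => by simp [sRefl, real_inner_smul_left, smul_sub, mul_smul] }
    (sRefl_sRefl α)).isometryOfInner (inner_sRefl_sRefl α)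

@[simp]
theorem coe_sReflEquiv (α : V) : ⇑(sReflEquiv α) = sRefl α := rfl

@[simp]
theorem sReflEquiv_mul_self (α : V) : sReflEquiv α * sReflEquiv α = 1 :=
  LinearIsometryEquiv.ext (sRefl_sRefl α)

@[simp]
theorem sReflEquiv_inv (α : V) : (sReflEquiv α)⁻¹ = sReflEquiv α :=
  inv_eq_of_mul_eq_one_right (sReflEquiv_mul_self α)

theorem coroot_map (g : V ≃ₗᵢ[ℝ] V) (α : V) : coroot (g α) = g (coroot α) := by
  rw [coroot, coroot, g.inner_map_map, map_smul]

theorem inner_map_coroot_map (g : V ≃ₗᵢ[ℝ] V) (v α : V) : ⟪g v, coroot (g α)⟫ = ⟪v, coroot α⟫ := by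
  rw [coroot_map, g.inner_map_map]

theorem inner_coroot_map (g : V ≃ₗᵢ[ℝ] V) (v α : V) : ⟪v, coroot (g α)⟫ = ⟪g⁻¹ v, coroot α⟫ := by
  rw [← inner_map_coroot_map g (g⁻¹ v) α, LinearIsometryEquiv.coe_inv, g.apply_symm_apply]

theorem sReflEquiv_map (g : V ≃ₗᵢ[ℝ] V) (α : V) :
    sReflEquiv (g α) = g * sReflEquiv α * g⁻¹ := by
  ext v
  simp [sRefl, inner_coroot_map]

end Reflection

namespace RootSystemData

variable {R : RootSystemData V} {α β γ v ν ν' μ : V}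

theorem ne_zero_of_mem_roots (hα : α ∈ R.roots) : α ≠ 0 :=
  fun h => R.roots_nonzero (h ▸ hα)

theorem simple_mem_roots (R : RootSystemData V) (i : Fin R.n) : R.simple i ∈ R.roots :=
  R.pos_subset (R.simple_mem i)

theorem simple_ne_zero (R : RootSystemData V) (i : Fin R.n) : R.simple i ≠ 0 :=
  ne_zero_of_mem_roots (R.simple_mem_roots i)

theorem mem_pos_or_neg_mem_pos (hα : α ∈ R.roots) : α ∈ R.pos ∨ -α ∈ R.pos := by
  rw [R.pos_union] at hα
  exact hα

theorem one_le_inner_coroot (hα : α ∈ R.roots) (hβ : β ∈ R.roots) (h : 0 < ⟪β, α⟫) :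
    1 ≤ ⟪β, coroot α⟫ := by
  obtain ⟨m, hm⟩ := R.crystallographic α hα β hβ
  have hpos : 0 < ⟪β, coroot α⟫ := by
    rw [inner_coroot]
    exact mul_pos (div_pos two_pos (real_inner_self_pos.mpr (ne_zero_of_mem_roots hα))) h
  rw [hm] at hpos ⊢
  exact_mod_cast (Int.cast_pos.mp hpos : 0 < m)

def simpleBasis (R : RootSystemData V) : Module.Basis (Fin R.n) ℝ V :=
  .mk R.simple_li R.simple_span.ge

@[simp]
theorem coe_simpleBasis (R : RootSystemData V) : ⇑R.simpleBasis = R.simple :=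
  Module.Basis.coe_mk _ _

theorem simpleBasis_repr_nonneg (hα : α ∈ R.pos) (j : Fin R.n) :
    0 ≤ R.simpleBasis.repr α j := by
  obtain ⟨c, rfl⟩ := R.pos_combo α hα
  have h := R.simpleBasis.repr_sum_self (fun i => (c i : ℝ))
  rw [coe_simpleBasis] at h
  rw [h]
  positivity

theorem neg_notMem_pos (hα : α ∈ R.pos) : -α ∉ R.pos := by
  intro hneg
  apply ne_zero_of_mem_roots (R.pos_subset hα)
  refine R.simpleBasis.repr.injective (Finsupp.ext fun j => ?_)
  have h := simpleBasis_repr_nonneg hneg j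
  simp only [map_neg, Finsupp.coe_neg, Pi.neg_apply, Left.nonneg_neg_iff] at h
  simpa using le_antisymm h (simpleBasis_repr_nonneg hα j)

theorem sRefl_simple_mem_pos {i : Fin R.n} (hα : α ∈ R.pos) (hne : α ≠ R.simple i) :
    sRefl (R.simple i) α ∈ R.pos := by
  have hroot := R.refl_mem _ (R.simple_mem_roots i) _ (R.pos_subset hα)
  refine (mem_pos_or_neg_mem_pos hroot).resolve_right fun hneg => ?_
  -- Off `i`, `α` and `sRefl (R.simple i) α` have the same coordinates, of opposite signs.
  have hcoord : ∀ j ≠ i, R.simpleBasis.repr α j = 0 := by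
    intro j hj
    have h := simpleBasis_repr_nonneg hneg j
    have hsimple : R.simpleBasis.repr (R.simple i) j = 0 := by
      rw [← coe_simpleBasis, Module.Basis.repr_self, Finsupp.single_eq_of_ne hj]
    simp only [sRefl, map_neg, map_sub, map_smul, Finsupp.coe_neg, Finsupp.coe_sub,
      Finsupp.coe_smul, Pi.neg_apply, Pi.sub_apply, Pi.smul_apply, hsimple, smul_zero, sub_zero,
      Left.nonneg_neg_iff] at h
    exact le_antisymm h (simpleBasis_repr_nonneg hα j)
  have hα_eq : R.simpleBasis.repr α i • R.simple i = α := by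
    conv_rhs => rw [← R.simpleBasis.sum_repr α]
    rw [Finset.sum_eq_single i (fun j _ hj => by rw [hcoord j hj, zero_smul]) (by simp),
      coe_simpleBasis]
  rcases R.reduced _ (R.simple_mem_roots i) _ (hα_eq ▸ R.pos_subset hα) with h | h
  · exact hne (hα_eq.symm.trans h)
  · exact neg_notMem_pos (R.simple_mem i) (by rw [← h, hα_eq]; exact hα)

def height (R : RootSystemData V) : V →ₗ[ℝ] ℝ := ∑ j, R.simpleBasis.coord j

theorem height_simple (i : Fin R.n) : R.height (R.simple i) = 1 := by
  simp [height, ← coe_simpleBasis, Finsupp.single_apply]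

theorem height_nonneg (hα : α ∈ R.pos) : 0 ≤ R.height α := by
  simp only [height, LinearMap.sum_apply, Module.Basis.coord_apply]
  exact Finset.sum_nonneg fun j _ => simpleBasis_repr_nonneg hα j

theorem exists_inner_simple_pos (hα : α ∈ R.pos) : ∃ i, 0 < ⟪α, R.simple i⟫ := by
  by_contra! h
  have hself : ⟪α, α⟫ = ∑ j, R.simpleBasis.repr α j * ⟪α, R.simple j⟫ := by
    nth_rewrite 2 [← R.simpleBasis.sum_repr α]
    simp only [inner_sum, real_inner_smul_right, coe_simpleBasis]
  have : ⟪α, α⟫ ≤ 0 := hself ▸ Finset.sum_nonpos fun j _ =>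
    mul_nonpos_of_nonneg_of_nonpos (simpleBasis_repr_nonneg hα j) (h j)
  exact (real_inner_self_pos.mpr (ne_zero_of_mem_roots (R.pos_subset hα))).not_ge this

def wordIso (R : RootSystemData V) (l : List (Fin R.n)) : V ≃ₗᵢ[ℝ] V :=
  (l.map fun i => sReflEquiv (R.simple i)).prod

@[simp]
theorem wordIso_nil : R.wordIso [] = 1 := rfl

@[simp]
theorem wordIso_cons (i : Fin R.n) (l : List (Fin R.n)) :
    R.wordIso (i :: l) = sReflEquiv (R.simple i) * R.wordIso l := by
  simp [wordIso]

@[simp]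
theorem wordIso_append (l l' : List (Fin R.n)) :
    R.wordIso (l ++ l') = R.wordIso l * R.wordIso l' := by
  simp [wordIso]

theorem wordIso_reverse (l : List (Fin R.n)) : R.wordIso l.reverse = (R.wordIso l)⁻¹ := by
  simp [wordIso, List.prod_inv_reverse, Function.comp_def, List.map_reverse]

theorem coe_wordIso (l : List (Fin R.n)) : ⇑(R.wordIso l) = R.wordProd l := by
  induction l with
  | nil => rfl
  | cons i l ih =>
    rw [wordIso_cons, LinearIsometryEquiv.coe_mul, ih, coe_sReflEquiv]
    rfl

theorem wordIso_mem_roots (l : List (Fin R.n)) (hα : α ∈ R.roots) : R.wordIso l α ∈ R.roots := by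
  induction l with
  | nil => exact hα
  | cons i l ih => exact R.refl_mem _ (R.simple_mem_roots i) _ ih

theorem wordProd_mem_weyl (l : List (Fin R.n)) : R.wordProd l ∈ R.weyl :=
  ⟨l.map R.simple, by simpa using fun i _ => R.simple_mem_roots i, by rw [List.map_map]; rfl⟩

theorem exists_eq_wordIso_simple (hα : α ∈ R.pos) :
    ∃ (l : List (Fin R.n)) (i : Fin R.n), α = R.wordIso l (R.simple i) := by
  obtain ⟨N, hN⟩ := exists_nat_gt (R.height α)
  induction N generalizing α with
  | zero => exact absurd hN (by simpa using (height_nonneg hα).not_gt)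
  | succ N ih =>
    obtain ⟨i, hi⟩ := exists_inner_simple_pos hα
    by_cases he : α = R.simple i
    · exact ⟨[], i, by simp [he]⟩
    have hstep := one_le_inner_coroot (R.simple_mem_roots i) (R.pos_subset hα) hi
    have hheight : R.height (sRefl (R.simple i) α) < N := by
      rw [sRefl, map_sub, map_smul, height_simple, smul_eq_mul, mul_one]
      push_cast at hN
      linarith
    obtain ⟨l, j, hl⟩ := ih (sRefl_simple_mem_pos hα he) hheight
    exact ⟨i :: l, j, by simp [← hl, sRefl_sRefl]⟩

theorem exists_sRefl_eq_wordIso (hα : α ∈ R.roots) : ∃ l, sReflEquiv α = R.wordIso l := by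
  wlog hpos : α ∈ R.pos generalizing α
  · have hneg := (mem_pos_or_neg_mem_pos hα).resolve_left hpos
    obtain ⟨l, hl⟩ := this (R.pos_subset hneg) hneg
    exact ⟨l, by rw [← hl]; ext; simp [sRefl_neg]⟩
  obtain ⟨l, i, rfl⟩ := exists_eq_wordIso_simple hpos
  exact ⟨l ++ i :: l.reverse, by simp [sReflEquiv_map, wordIso_reverse, mul_assoc]⟩

theorem exists_eq_wordIso_of_mem_weyl {w : V → V} (hw : w ∈ R.weyl) :
    ∃ l, w = ⇑(R.wordIso l) := by
  obtain ⟨roots, hroots, rfl⟩ := hw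
  induction roots with
  | nil => exact ⟨[], rfl⟩
  | cons α roots ih =>
    obtain ⟨l, hl⟩ := ih fun β hβ => hroots β (List.mem_cons_of_mem α hβ)
    obtain ⟨l', hl'⟩ := exists_sRefl_eq_wordIso (hroots α List.mem_cons_self)
    refine ⟨l' ++ l, ?_⟩
    rw [wordIso_append, LinearIsometryEquiv.coe_mul, ← hl', ← hl, coe_sReflEquiv]
    rfl

theorem mem_orbit_iff {u : V} : u ∈ R.orbit v ↔ ∃ l, u = R.wordIso l v := by
  constructor
  · rintro ⟨w, hw, rfl⟩
    obtain ⟨l, rfl⟩ := exists_eq_wordIso_of_mem_weyl hw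
    exact ⟨l, rfl⟩
  · rintro ⟨l, rfl⟩
    exact ⟨_, wordProd_mem_weyl l, by rw [coe_wordIso]⟩

theorem wordIso_mem_weightLattice (l : List (Fin R.n)) (hv : v ∈ R.weightLattice) :
    R.wordIso l v ∈ R.weightLattice := by
  intro α hα
  obtain ⟨z, hz⟩ := hv _ (wordIso_mem_roots l.reverse hα)
  refine ⟨z, ?_⟩
  rw [← hz, ← inner_map_coroot_map (R.wordIso l.reverse)]
  simp [wordIso_reverse, LinearIsometryEquiv.coe_inv]

theorem mem_weightLattice_of_simple
    (hv : ∀ i, ∃ z : ℤ, ⟪v, coroot (R.simple i)⟫ = z) : v ∈ R.weightLattice := by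
  have hword : ∀ (l : List (Fin R.n)) i, ∃ z : ℤ, ⟪R.wordIso l v, coroot (R.simple i)⟫ = z := by
    intro l
    induction l with
    | nil => simpa using hv
    | cons j l ih =>
      intro i
      obtain ⟨a, ha⟩ := ih i
      obtain ⟨b, hb⟩ := ih j
      obtain ⟨c, hc⟩ :=
        R.crystallographic _ (R.simple_mem_roots i) _ (R.simple_mem_roots j)
      refine ⟨a - b * c, ?_⟩
      simp [sRefl, inner_sub_left, real_inner_smul_left, ha, hb, hc]
  have hpos : ∀ α ∈ R.pos, ∃ z : ℤ, ⟪v, coroot α⟫ = z := by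
    intro α hα
    obtain ⟨l, i, rfl⟩ := exists_eq_wordIso_simple hα
    obtain ⟨z, hz⟩ := hword l.reverse i
    refine ⟨z, ?_⟩
    rw [inner_coroot_map, ← wordIso_reverse, hz]
  intro α hα
  rcases mem_pos_or_neg_mem_pos hα with h | h
  · exact hpos α h
  · obtain ⟨z, hz⟩ := hpos _ h
    exact ⟨-z, by rw [Int.cast_neg, ← hz, coroot_neg, inner_neg_right, neg_neg]⟩

theorem strong_exchange (l : List (Fin R.n)) (hα : α ∈ R.pos)
    (hneg : -(R.wordIso l α) ∈ R.pos) :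
    ∃ l' : List (Fin R.n), l'.length + 1 = l.length ∧
      R.wordIso l * sReflEquiv α = R.wordIso l' := by
  induction l using List.reverseRecOn generalizing α with
  | nil => exact absurd hneg (neg_notMem_pos hα)
  | append_singleton l i ih =>
    rcases mem_pos_or_neg_mem_pos (R.refl_mem _ (R.simple_mem_roots i) _ (R.pos_subset hα))
      with hpos | hneg'
    · obtain ⟨l', hlen, hl'⟩ := ih hpos (by simpa using hneg)
      refine ⟨l' ++ [i], by simp [← hlen], ?_⟩
      have hconj := sReflEquiv_map (sReflEquiv (R.simple i)) α
      simp only [coe_sReflEquiv, sReflEquiv_inv] at hconj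
      simp [← hl', hconj, mul_assoc]
    · obtain rfl : α = R.simple i :=
        by_contra fun hne => neg_notMem_pos (sRefl_simple_mem_pos hα hne) hneg'
      exact ⟨l, by simp, by simp [mul_assoc]⟩

theorem wordIso_eq_one_or_exists_descent (l : List (Fin R.n)) :
    R.wordIso l = 1 ∨ ∃ i, -(R.wordIso l (R.simple i)) ∈ R.pos := by
  induction hlen : l.length using Nat.strong_induction_on generalizing l with
  | _ N ih =>
    by_cases hdesc : ∃ i, -(R.wordIso l (R.simple i)) ∈ R.pos
    · exact .inr hdesc
    rcases l.eq_nil_or_concat' with rfl | ⟨l, i, rfl⟩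
    · exact .inl rfl
    -- Without descents, the last letter `i` gives a descent of the shorter word `l`.
    have hpos := (mem_pos_or_neg_mem_pos
      (wordIso_mem_roots (l ++ [i]) (R.simple_mem_roots i))).resolve_right (hdesc ⟨i, ·⟩)
    simp only [wordIso_append, wordIso_cons, wordIso_nil, mul_one, LinearIsometryEquiv.coe_mul,
      Function.comp_apply, coe_sReflEquiv, sRefl_self (R.simple_ne_zero i), map_neg] at hpos
    obtain ⟨l', hlen', hl'⟩ := strong_exchange l (R.simple_mem i) hpos
    have := ih l'.length (by simp at hlen; omega) l' rfl
    simpa [← hl'] using this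

theorem IsDominant.add (hν : R.IsDominant ν) (hν' : R.IsDominant ν') : R.IsDominant (ν + ν') :=
  fun i => by rw [inner_add_left]; exact add_nonneg (hν i) (hν' i)

theorem IsDominant.inner_nonneg (hν : R.IsDominant ν) (hβ : β ∈ R.pos) : 0 ≤ ⟪ν, β⟫ := by
  rw [← R.simpleBasis.sum_repr β, inner_sum]
  refine Finset.sum_nonneg fun j _ => ?_
  rw [real_inner_smul_right, coe_simpleBasis]
  exact mul_nonneg (simpleBasis_repr_nonneg hβ j)
    ((inner_coroot_nonneg_iff (R.simple_ne_zero j)).mp (hν j))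

theorem inner_eq_zero_of_neg_map_mem_pos (g : V ≃ₗᵢ[ℝ] V) (hν : R.IsDominant ν)
    (hgν : R.IsDominant (g ν)) (hβ : β ∈ R.pos) (hgβ : -(g β) ∈ R.pos) : ⟪ν, β⟫ = 0 := by
  have h := hgν.inner_nonneg hgβ
  rw [inner_neg_right, g.inner_map_map] at h
  exact le_antisymm (neg_nonneg.mp h) (hν.inner_nonneg hβ)

theorem eq_of_isDominant_of_wordIso_apply_eq (hν : R.IsDominant ν) (hν' : R.IsDominant ν')
    (l : List (Fin R.n)) (h : R.wordIso l ν = ν') : ν = ν' := by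
  induction hlen : l.length using Nat.strong_induction_on generalizing l with
  | _ N ih =>
    rcases wordIso_eq_one_or_exists_descent l with hl | ⟨i, hi⟩
    · simpa [hl] using h
    have hνi := inner_eq_zero_of_neg_map_mem_pos _ hν (h ▸ hν') (R.simple_mem i) hi
    obtain ⟨l', hlen', hl'⟩ := strong_exchange l (R.simple_mem i) hi
    refine ih l'.length (by omega) l' ?_ rfl
    rw [← hl', LinearIsometryEquiv.coe_mul, Function.comp_apply, coe_sReflEquiv,
      sRefl_of_inner_eq_zero hνi, h]

theorem wordIso_eq_of_apply_eq (hν : R.IsDominant ν) {l l' : List (Fin R.n)}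
    (h : R.wordIso l ν = R.wordIso l' ν)
    (hl : ∀ γ ∈ R.pos, ⟪ν, γ⟫ = 0 → R.wordIso l γ ∈ R.pos)
    (hl' : ∀ γ ∈ R.pos, ⟪ν, γ⟫ = 0 → R.wordIso l' γ ∈ R.pos) :
    R.wordIso l = R.wordIso l' := by
  have hu : R.wordIso (l.reverse ++ l') = (R.wordIso l)⁻¹ * R.wordIso l' := by
    rw [wordIso_append, wordIso_reverse]
  have huν : R.wordIso (l.reverse ++ l') ν = ν := by
    simp [hu, ← h, LinearIsometryEquiv.coe_inv]
  rcases wordIso_eq_one_or_exists_descent (l.reverse ++ l') with h1 | ⟨i, hi⟩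
  · exact (inv_mul_eq_one.mp (hu ▸ h1))
  -- A descent `i` of `l⁻¹ l'` would make `l` send the positive root `-(l⁻¹ l' αᵢ)`,
  -- orthogonal to `ν`, to the negative root `-(l' αᵢ)`.
  exfalso
  have hνi := inner_eq_zero_of_neg_map_mem_pos _ hν (huν.symm ▸ hν) (R.simple_mem i) hi
  have hγ : ⟪ν, -(R.wordIso (l.reverse ++ l') (R.simple i))⟫ = 0 := by
    conv_lhs => rw [← huν]
    rw [inner_neg_right, LinearIsometryEquiv.inner_map_map, hνi, neg_zero]
  have hneg := hl _ hi hγ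
  simp only [hu, map_neg, LinearIsometryEquiv.coe_mul, Function.comp_apply,
    LinearIsometryEquiv.coe_inv, LinearIsometryEquiv.apply_symm_apply] at hneg
  exact neg_notMem_pos (hl' _ (R.simple_mem i) hνi) hneg

theorem coxLen_le_length {w : V → V} (l : List (Fin R.n)) (hl : w = R.wordProd l) :
    R.coxLen w ≤ l.length :=
  Nat.sInf_le ⟨l, rfl, hl⟩

theorem exists_wordIso_length_eq_coxLen {w : V → V} (hw : w ∈ R.weyl) :
    ∃ l : List (Fin R.n), l.length = R.coxLen w ∧ w = ⇑(R.wordIso l) := by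
  obtain ⟨l, rfl⟩ := exists_eq_wordIso_of_mem_weyl hw
  obtain ⟨l', hlen, hl'⟩ := Nat.sInf_mem (s := {m | ∃ l' : List (Fin R.n),
    l'.length = m ∧ ⇑(R.wordIso l) = R.wordProd l'}) ⟨l.length, l, rfl, coe_wordIso l⟩
  exact ⟨l', hlen, hl'.trans (coe_wordIso l').symm⟩

theorem map_mem_pos_of_coxLen_le {w : V → V} (hw : w ∈ R.weyl) (hwν : w ν = μ)
    (hmin : ∀ w' ∈ R.weyl, w' ν = μ → R.coxLen w ≤ R.coxLen w') (hγ : γ ∈ R.pos)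
    (hνγ : ⟪ν, γ⟫ = 0) : w γ ∈ R.pos := by
  obtain ⟨l, hlen, rfl⟩ := exists_wordIso_length_eq_coxLen hw
  refine (mem_pos_or_neg_mem_pos (wordIso_mem_roots l (R.pos_subset hγ))).resolve_right
    fun hneg => ?_
  -- Otherwise `w ∘ sRefl γ` is shorter and still sends `ν` to `μ`.
  obtain ⟨l', hlen', hl'⟩ := strong_exchange l hγ hneg
  have hshort := hmin _ (wordProd_mem_weyl l') (by
    rw [← coe_wordIso, ← hl', LinearIsometryEquiv.coe_mul, Function.comp_apply, coe_sReflEquiv,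
      sRefl_of_inner_eq_zero hνγ, hwν])
  have := coxLen_le_length l' rfl
  omega

def rho (R : RootSystemData V) (fw : Fin R.n → V) (k : V → ℕ) : V :=
  ∑ i, (k (R.simple i) : ℝ) • fw i

theorem rho_add (R : RootSystemData V) (fw : Fin R.n → V) (k m : V → ℕ) :
    R.rho fw (fun α => k α + m α) = R.rho fw k + R.rho fw m := by
  simp only [rho, Nat.cast_add, add_smul, Finset.sum_add_distrib]

theorem inner_rho_coroot_simple
    (hfw : ∀ i j, ⟪fw i, coroot (R.simple j)⟫ = if i = j then (1 : ℝ) else 0)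
    (k : V → ℕ) (j : Fin R.n) : ⟪R.rho fw k, coroot (R.simple j)⟫ = k (R.simple j) := by
  simp [rho, sum_inner, real_inner_smul_left, hfw]

theorem isDominant_rho
    (hfw : ∀ i j, ⟪fw i, coroot (R.simple j)⟫ = if i = j then (1 : ℝ) else 0)
    (k : V → ℕ) : R.IsDominant (R.rho fw k) :=
  fun j => (inner_rho_coroot_simple hfw k j).symm ▸ Nat.cast_nonneg _

theorem rho_mem_weightLattice
    (hfw : ∀ i j, ⟪fw i, coroot (R.simple j)⟫ = if i = j then (1 : ℝ) else 0)
    (k : V → ℕ) : R.rho fw k ∈ R.weightLattice :=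
  mem_weightLattice_of_simple fun j => ⟨k (R.simple j), inner_rho_coroot_simple hfw k j⟩

end RootSystemData

section Eta

open RootSystemData

variable {R : RootSystemData V} {fw : Fin R.n → V} {dm : V → V} {wl : V → V → V} {lam ν : V}

theorem etaMap_eq (hw : wl lam ∈ R.weyl) (hν : wl lam ν = lam) (k : V → ℕ) :
    etaMap R fw wl k lam = wl lam (ν + R.rho fw k) := by
  obtain ⟨l, hl⟩ := exists_eq_wordIso_of_mem_weyl hw
  change lam + wl lam (R.rho fw k) = _
  rw [hl, map_add, ← hl, hν]

theorem etaMap_mem_weightLattice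
    (hfw : ∀ i j, ⟪fw i, coroot (R.simple j)⟫ = if i = j then (1 : ℝ) else 0)
    (hw : wl lam ∈ R.weyl) (hlam : lam ∈ R.weightLattice) (k : V → ℕ) :
    etaMap R fw wl k lam ∈ R.weightLattice := by
  obtain ⟨l, hl⟩ := exists_eq_wordIso_of_mem_weyl hw
  intro α hα
  obtain ⟨a, ha⟩ := hlam α hα
  obtain ⟨b, hb⟩ := wordIso_mem_weightLattice l (rho_mem_weightLattice hfw k) α hα
  refine ⟨a + b, ?_⟩
  rw [etaMap, hl, inner_add_left, ha, ← rho, hb, Int.cast_add]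

theorem dm_etaMap
    (hfw : ∀ i j, ⟪fw i, coroot (R.simple j)⟫ = if i = j then (1 : ℝ) else 0)
    (hdm : ∀ lam ∈ R.weightLattice, dm lam ∈ R.orbit lam ∧ R.IsDominant (dm lam))
    (hw : wl lam ∈ R.weyl) (hwν : wl lam (dm lam) = lam) (hlam : lam ∈ R.weightLattice)
    (k : V → ℕ) : dm (etaMap R fw wl k lam) = dm lam + R.rho fw k := by
  have hη := etaMap_mem_weightLattice hfw hw hlam k
  obtain ⟨l, hl⟩ := exists_eq_wordIso_of_mem_weyl hw
  obtain ⟨l', hl'⟩ := mem_orbit_iff.mp (hdm _ hη).1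
  refine (eq_of_isDominant_of_wordIso_apply_eq ((hdm lam hlam).2.add (isDominant_rho hfw k))
    (hdm _ hη).2 (l' ++ l) ?_).symm
  rw [hl', etaMap_eq hw hwν, hl, wordIso_append, LinearIsometryEquiv.coe_mul, Function.comp_apply]

theorem wl_etaMap
    (hfw : ∀ i j, ⟪fw i, coroot (R.simple j)⟫ = if i = j then (1 : ℝ) else 0)
    (hdm : ∀ lam ∈ R.weightLattice, dm lam ∈ R.orbit lam ∧ R.IsDominant (dm lam))
    (hwl : ∀ lam ∈ R.weightLattice, wl lam ∈ R.weyl ∧ wl lam (dm lam) = lam ∧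
      ∀ w ∈ R.weyl, w (dm lam) = lam → R.coxLen (wl lam) ≤ R.coxLen w)
    (hlam : lam ∈ R.weightLattice) (k : V → ℕ) : wl (etaMap R fw wl k lam) = wl lam := by
  obtain ⟨hw, hwν, hmin⟩ := hwl lam hlam
  have hη := etaMap_mem_weightLattice hfw hw hlam k
  obtain ⟨hw', hwν', hmin'⟩ := hwl _ hη
  have hdmη := dm_etaMap hfw hdm hw hwν hlam k
  obtain ⟨l, hl⟩ := exists_eq_wordIso_of_mem_weyl hw
  obtain ⟨l', hl'⟩ := exists_eq_wordIso_of_mem_weyl hw'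
  have hν := (hdm lam hlam).2
  have hρ := isDominant_rho hfw k
  -- Both send `dm lam + ρ_𝐤` to `η_𝐤(lam)` and keep positive the positive roots orthogonal to it.
  rw [hl, hl', wordIso_eq_of_apply_eq (hν.add hρ) (l := l') (l' := l)]
  · rw [← hl, ← hl', ← etaMap_eq hw hwν, ← hdmη, hwν']
  · intro γ hγ h0
    exact hl' ▸ map_mem_pos_of_coxLen_le hw' hwν' hmin' hγ (hdmη ▸ h0)
  · intro γ hγ h0
    rw [inner_add_left] at h0
    have := hν.inner_nonneg hγ
    have := hρ.inner_nonneg hγ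
    exact hl ▸ map_mem_pos_of_coxLen_le hw hwν hmin hγ (by linarith)

end Eta

theorem statement4_general (R : RootSystemData V)
    (fw : Fin R.n → V)
    (hfw : ∀ i j, ⟪fw i, coroot (R.simple j)⟫ = if i = j then (1 : ℝ) else 0)
    (dm : V → V)
    (hdm : ∀ lam ∈ R.weightLattice, dm lam ∈ R.orbit lam ∧ R.IsDominant (dm lam))
    (wl : V → V → V)
    (hwl : ∀ lam ∈ R.weightLattice, wl lam ∈ R.weyl ∧ wl lam (dm lam) = lam ∧
      ∀ w ∈ R.weyl, w (dm lam) = lam → R.coxLen (wl lam) ≤ R.coxLen w)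
    (k m : V → ℕ) :
    (∀ lam ∈ R.weightLattice,
      etaMap R fw wl (fun α => k α + m α) lam = etaMap R fw wl m (etaMap R fw wl k lam)) ∧
    (∀ lam ∈ R.weightLattice, ∀ mu ∈ R.weightLattice,
      etaMap R fw wl k lam = etaMap R fw wl k mu → lam = mu) := by
  refine ⟨fun lam hlam => ?_, fun lam hlam mu hmu h => ?_⟩
  · obtain ⟨hw, hwν, -⟩ := hwl lam hlam
    have hη := etaMap_mem_weightLattice hfw hw hlam k
    obtain ⟨hw', hwν', -⟩ := hwl _ hη
    rw [etaMap_eq hw hwν, etaMap_eq hw' hwν', dm_etaMap hfw hdm hw hwν hlam,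
      wl_etaMap hfw hdm hwl hlam, R.rho_add, add_assoc]
  · obtain ⟨hw₁, hwν₁, -⟩ := hwl lam hlam
    obtain ⟨hw₂, hwν₂, -⟩ := hwl mu hmu
    have hdm_eq : dm lam = dm mu := add_right_cancel (b := R.rho fw k) <| by
      rw [← dm_etaMap hfw hdm hw₁ hwν₁ hlam, ← dm_etaMap hfw hdm hw₂ hwν₂ hmu, h]
    have hwl_eq : wl lam = wl mu := by
      rw [← wl_etaMap hfw hdm hwl hlam k, ← wl_etaMap hfw hdm hwl hmu k, h]
    rw [← hwν₁, ← hwν₂, hdm_eq, hwl_eq]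

/-- `η_{𝐤+𝐦} = η_𝐦 ∘ η_𝐤`, and each `η_𝐤` is injective on the weight lattice. -/
theorem statement4 (R : RootSystemData V)
    (fw : Fin R.n → V)
    (hfw : ∀ i j, ⟪fw i, coroot (R.simple j)⟫ = if i = j then (1 : ℝ) else 0)
    (dm : V → V)
    (hdm : ∀ lam ∈ R.weightLattice, dm lam ∈ R.orbit lam ∧ R.IsDominant (dm lam))
    (wl : V → V → V)
    (hwl : ∀ lam ∈ R.weightLattice, wl lam ∈ R.weyl ∧ wl lam (dm lam) = lam ∧
      ∀ w ∈ R.weyl, w (dm lam) = lam → R.coxLen (wl lam) ≤ R.coxLen w)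
    (k m : V → ℕ) (hk : R.IsWInvariant k) (hm : R.IsWInvariant m) :
    (∀ lam ∈ R.weightLattice,
      etaMap R fw wl (fun α => k α + m α) lam = etaMap R fw wl m (etaMap R fw wl k lam)) ∧
    (∀ lam ∈ R.weightLattice, ∀ mu ∈ R.weightLattice,
      etaMap R fw wl k lam = etaMap R fw wl k mu → lam = mu) :=
  statement4_general R fw hfw dm hdm wl hwl k m
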